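/- Let X be a topological space, let 𝒜 be an openly isotone, functionally separated family of open subsets of X, let W be a bounded open neighborhood of 0 in ℝ, and let n ≥ 1 be such that Wₙ := (−1/n, 1/n) ⊆ W. Then 𝒜 = {G ∈ C(X,$) : there exists f ∈ C(X,ℝ) with f⁻¹(Wₙ) ∈ 𝒜 and f⁻¹(W) ⊆ G}. (Consequently, for a functionally separated filter α on C(X,$), α coincides with the filter [α,𝒩(0)]⁻(W) up to openly isotone hulls.) -/

import Mathlib

open TopologicalSpace Topology

/-- A family of open sets is *openly isotone* if it is upward closed among open sets. -/
def OpenlyIsotone {X : Type*} [TopologicalSpace X] (A : Set (Opens X)) : Prop :=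
  ∀ ⦃U V : Opens X⦄, U ∈ A → U ≤ V → V ∈ A

/-- The preimage of an open set under a continuous map, as an open set. -/
def preim {X Z : Type*} [TopologicalSpace X] [TopologicalSpace Z]
    (f : C(X, Z)) (U : Opens Z) : Opens X :=
  ⟨f ⁻¹' U, U.isOpen.preimage f.continuous⟩

/-- The basic open neighborhood `Wₙ = (-1/n, 1/n)` of `0` in `ℝ`. -/
def Wball (n : ℕ) : Opens ℝ :=
  ⟨Set.Ioo (-(1 / (n : ℝ))) (1 / (n : ℝ)), isOpen_Ioo⟩

/-- An openly isotone family `𝒜` is *functionally separated* if for every `O ∈ 𝒜` there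
are `A ∈ 𝒜` and a continuous `h : X → [0,1]` with `h ≡ 0` on `A` and `h ≡ 1` off `O`. -/
def FunctionallySeparated {X : Type*} [TopologicalSpace X] (𝒜 : Set (Opens X)) : Prop :=
  ∀ O ∈ 𝒜, ∃ A ∈ 𝒜, ∃ h : C(X, ℝ),
    (∀ x, h x ∈ Set.Icc (0 : ℝ) 1) ∧ (∀ x ∈ (A : Set X), h x = 0) ∧
      ∀ x ∉ (O : Set X), h x = 1

theorem Bornology.IsBounded.exists_notMem_real {W : Set ℝ} (hW : Bornology.IsBounded W) :
    ∃ c, c ∉ W := by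
  obtain ⟨b, hb⟩ := hW.bddAbove
  exact ⟨b + 1, fun hmem => by linarith [hb hmem]⟩

theorem zero_mem_Wball {n : ℕ} (hn : 1 ≤ n) : (0 : ℝ) ∈ Wball n := by
  have : (0 : ℝ) < 1 / n := by positivity
  exact ⟨by linarith, this⟩

theorem preim_mono {X Z : Type*} [TopologicalSpace X] [TopologicalSpace Z] (f : C(X, Z))
    {U V : Opens Z} (hUV : U ≤ V) : preim f U ≤ preim f V :=
  fun _ hx => hUV hx

/- The witness is `f = c • h`: it vanishes on `A`, so `f⁻¹(U) ⊇ A`, and equals `c ∉ V` off `O`. -/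
theorem FunctionallySeparated.exists_preim_mem_preim_le {X : Type*} [TopologicalSpace X]
    {𝒜 : Set (Opens X)} (hsep : FunctionallySeparated 𝒜) (hiso : OpenlyIsotone 𝒜)
    {U V : Opens ℝ} (hU : (0 : ℝ) ∈ U) {c : ℝ} (hc : c ∉ V) {O : Opens X} (hO : O ∈ 𝒜) :
    ∃ f : C(X, ℝ), preim f U ∈ 𝒜 ∧ preim f V ≤ O := by
  obtain ⟨A, hA, h, -, h_zero, h_one⟩ := hsep O hO
  refine ⟨c • h, hiso hA fun x hx => ?_, fun x hx => ?_⟩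
  · simpa [preim, h_zero x hx] using hU
  · by_contra hxO
    exact hc (by simpa [preim, h_one x hxO] using hx)

theorem functionallySeparated_eq_general {X : Type*} [TopologicalSpace X]
    (𝒜 : Set (Opens X)) (hiso : OpenlyIsotone 𝒜) (hsep : FunctionallySeparated 𝒜)
    (W : Set ℝ) (hW : IsOpen W) (hbdd : Bornology.IsBounded W)
    (n : ℕ) (hn : 1 ≤ n) (hWn : Set.Ioo (-(1 / (n : ℝ))) (1 / (n : ℝ)) ⊆ W) :
    𝒜 = {G : Opens X |
      ∃ f : C(X, ℝ), preim f (Wball n) ∈ 𝒜 ∧ preim f ⟨W, hW⟩ ≤ G} := by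
  obtain ⟨c, hc⟩ := hbdd.exists_notMem_real
  ext G
  constructor
  · exact hsep.exists_preim_mem_preim_le hiso (zero_mem_Wball hn) (V := ⟨W, hW⟩) hc
  · rintro ⟨f, hf, hfG⟩
    exact hiso hf ((preim_mono f (V := ⟨W, hW⟩) hWn).trans hfG)

/-- For an openly isotone, functionally separated family `𝒜` on `X`, a bounded open
neighborhood `W` of `0` in `ℝ` and `n ≥ 1` with `Wₙ ⊆ W`, the family `𝒜` equals
`{G : there is f ∈ C(X,ℝ) with f⁻¹(Wₙ) ∈ 𝒜 and f⁻¹(W) ⊆ G}`. -/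
theorem functionallySeparated_eq {X : Type*} [TopologicalSpace X]
    (𝒜 : Set (Opens X)) (hiso : OpenlyIsotone 𝒜) (hsep : FunctionallySeparated 𝒜)
    (W : Set ℝ) (hW : IsOpen W) (h0 : (0 : ℝ) ∈ W) (hbdd : Bornology.IsBounded W)
    (n : ℕ) (hn : 1 ≤ n) (hWn : Set.Ioo (-(1 / (n : ℝ))) (1 / (n : ℝ)) ⊆ W) :
    𝒜 = {G : Opens X |
      ∃ f : C(X, ℝ), preim f (Wball n) ∈ 𝒜 ∧ preim f ⟨W, hW⟩ ≤ G} :=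
  functionallySeparated_eq_general 𝒜 hiso hsep W hW hbdd n hn hWn
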